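/- With ε : W ⊗ E → E the Clifford-type multiplication on E = Λ•W (as a spin representation via σ), the subrepresentation F = ker ε ⊂ W ⊗ E admits a canonical so(n)-equivariant splitting: the map Π : W ⊗ E → F defined in indices by T_{aα} ↦ T_{aα} + (1/n) ε_{aα}{}^β ε^c{}_β{}^γ T_{cγ} is a projection onto F (Π∘Π = Π, range Π = ker ε), equivariant for the so(n)-action. -/

import Mathlib

noncomputable section

open scoped InnerProductSpace TensorProduct

/-- `W = ℝⁿ`. -/
abbrev W (n : ℕ) := EuclideanSpace ℝ (Fin n)

/-- `E = Λ•W`. -/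
abbrev E (n : ℕ) := ExteriorAlgebra ℝ (W n)

/-- The Clifford-type action `v ↦ (e ↦ v.e = v∧e − v⌟e)` as a linear map
`W → End(Λ•W)`. -/
def clHom (n : ℕ) : W n →ₗ[ℝ] Module.End ℝ (E n) :=
  (LinearMap.mul ℝ (E n)).comp (ExteriorAlgebra.ι ℝ)
    - (CliffordAlgebra.contractLeft (Q := (0 : QuadraticForm ℝ (W n)))).comp
        (innerₗ (W n))

/-- `ε : W ⊗ E → E`, `ε(v ⊗ e) = v.e`. -/
def eps (n : ℕ) : (W n ⊗[ℝ] E n) →ₗ[ℝ] E n :=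
  TensorProduct.lift (clHom n)

/-- `j : E → W ⊗ E`, `j(e) = ∑ᵢ eᵢ ⊗ eᵢ.e` for the standard orthonormal basis. -/
def jmap (n : ℕ) : E n →ₗ[ℝ] (W n ⊗[ℝ] E n) :=
  ∑ a : Fin n,
    (TensorProduct.mk ℝ (W n) (E n) (EuclideanSpace.basisFun (Fin n) ℝ a)).comp
      (clHom n (EuclideanSpace.basisFun (Fin n) ℝ a))

/-- The splitting map `Π : W ⊗ E → W ⊗ E`,
`Π(w⊗e) = w⊗e + (1/n) ∑ᵢ eᵢ ⊗ eᵢ.(w.e)`, i.e. in indices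
`T_{aα} ↦ T_{aα} + (1/n) ε_{aα}{}^β ε^c{}_β{}^γ T_{cγ}`. -/
def proj (n : ℕ) : (W n ⊗[ℝ] E n) →ₗ[ℝ] (W n ⊗[ℝ] E n) :=
  LinearMap.id + (1 / (n : ℝ)) • ((jmap n).comp (eps n))

/-- The spin action of the simple bivector `t∧u` on `E = Λ•W`:
`σ(t∧u) = −(1/8)(t.u. − u.t.)`. -/
def spinEnd (n : ℕ) (t u : W n) : Module.End ℝ (E n) :=
  (-(1/8 : ℝ)) • (clHom n t * clHom n u - clHom n u * clHom n t)

/-- The standard action of the simple bivector `t∧u ∈ Λ²W = so(n)` on `W`: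
`v ↦ (1/2)(⟨u,v⟩t − ⟨t,v⟩u)`. -/
def bivEnd (n : ℕ) (t u : W n) : W n →ₗ[ℝ] W n :=
  (1/2 : ℝ) • ((innerₗ (W n) u).smulRight t - (innerₗ (W n) t).smulRight u)

/-- The diagonal `so(n)`-action of the simple bivector `t∧u` on `W ⊗ E`. -/
def actWE (n : ℕ) (t u : W n) : (W n ⊗[ℝ] E n) →ₗ[ℝ] (W n ⊗[ℝ] E n) :=
  TensorProduct.map (bivEnd n t u) LinearMap.id
    + TensorProduct.map LinearMap.id (spinEnd n t u)

/-! The operators `v.` satisfy the Clifford relations `v.w. + w.v. = -2⟪v, w⟫`. Summing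
`eᵢ.eᵢ. = -1` over an orthonormal basis gives `ε ∘ j = -n`, so `ε ∘ Π = 0` while `Π` fixes
`ker ε`; this is all a projection onto `ker ε` needs. The Clifford relations also give
`[σ(t∧u), v.] = ((t∧u)v).`, which is the equivariance of `ε`; `j` is equivariant because
`∑ eᵢ ⊗ eᵢ` is an `so(n)`-invariant tensor, i.e. `t∧u` acts on `W` by a skew map. -/

section Projection

variable {R M N : Type*} [CommSemiring R] [AddCommMonoid M] [Module R M] [AddCommMonoid N]
  [Module R N]
  (ε : M →ₗ[R] N) (j : N →ₗ[R] M) (c : R)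

theorem id_add_smul_comp_idempotent (h : ε ∘ₗ (LinearMap.id + c • (j ∘ₗ ε)) = 0) :
    (LinearMap.id + c • (j ∘ₗ ε)) ∘ₗ (LinearMap.id + c • (j ∘ₗ ε))
      = LinearMap.id + c • (j ∘ₗ ε) := by
  rw [LinearMap.add_comp, LinearMap.id_comp, LinearMap.smul_comp, LinearMap.comp_assoc, h,
    LinearMap.comp_zero, smul_zero, add_zero]

theorem range_id_add_smul_comp (h : ε ∘ₗ (LinearMap.id + c • (j ∘ₗ ε)) = 0) :
    LinearMap.range (LinearMap.id + c • (j ∘ₗ ε)) = LinearMap.ker ε := by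
  apply le_antisymm
  · rintro _ ⟨x, rfl⟩
    exact LinearMap.congr_fun h x
  · intro x hx
    refine ⟨x, ?_⟩
    simp [LinearMap.mem_ker.mp hx]

theorem id_add_smul_comp_commute {A : M →ₗ[R] M} {B : N →ₗ[R] N}
    (hε : ε ∘ₗ A = B ∘ₗ ε) (hj : j ∘ₗ B = A ∘ₗ j) :
    (LinearMap.id + c • (j ∘ₗ ε)) ∘ₗ A = A ∘ₗ (LinearMap.id + c • (j ∘ₗ ε)) := by
  rw [LinearMap.add_comp, LinearMap.comp_add, LinearMap.smul_comp, LinearMap.comp_smul,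
    LinearMap.comp_assoc, hε, ← LinearMap.comp_assoc, hj, LinearMap.comp_assoc,
    LinearMap.id_comp, LinearMap.comp_id]

end Projection

theorem commutator_mul_sub_mul_of_anticomm {R A : Type*} [CommRing R] [Ring A] [Algebra R A]
    {a b x : A} {α β : R} (ha : a * x + x * a = α • 1) (hb : b * x + x * b = β • 1) :
    (a * b - b * a) * x - x * (a * b - b * a) = (2 * β) • a - (2 * α) • b := by
  have hax : a * x = α • 1 - x * a := eq_sub_of_add_eq ha
  have hbx : b * x = β • 1 - x * b := eq_sub_of_add_eq hb
  simp only [sub_mul, mul_sub, mul_assoc, hax, hbx, mul_smul_comm, mul_one]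
  simp only [← mul_assoc, hax, hbx, sub_mul, smul_mul_assoc, one_mul]
  module

theorem OrthonormalBasis.sum_tmul_of_skew {ι V M : Type*} [Fintype ι] [NormedAddCommGroup V]
    [InnerProductSpace ℝ V] [AddCommGroup M] [Module ℝ M] (b : OrthonormalBasis ι ℝ V)
    {L : V →ₗ[ℝ] V} (hL : ∀ x y, ⟪L x, y⟫_ℝ = -⟪x, L y⟫_ℝ) (g : V →ₗ[ℝ] M) :
    ∑ i, L (b i) ⊗ₜ[ℝ] g (b i) = -∑ i, b i ⊗ₜ[ℝ] g (L (b i)) := by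
  calc ∑ i, L (b i) ⊗ₜ[ℝ] g (b i)
      = ∑ i, ∑ k, ⟪b k, L (b i)⟫_ℝ • (b k ⊗ₜ[ℝ] g (b i)) := by
        refine Finset.sum_congr rfl fun i _ => ?_
        conv_lhs => rw [← b.sum_repr' (L (b i))]
        simp only [TensorProduct.sum_tmul, TensorProduct.smul_tmul']
    _ = ∑ k, ∑ i, ⟪b k, L (b i)⟫_ℝ • (b k ⊗ₜ[ℝ] g (b i)) := Finset.sum_comm
    _ = -∑ k, b k ⊗ₜ[ℝ] g (L (b k)) := by
        rw [← Finset.sum_neg_distrib]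
        refine Finset.sum_congr rfl fun k _ => ?_
        conv_rhs => rw [← b.sum_repr' (L (b k))]
        simp only [map_sum, map_smul, TensorProduct.tmul_sum, TensorProduct.tmul_smul,
          ← Finset.sum_neg_distrib, ← neg_smul, ← hL, real_inner_comm]

theorem clHom_apply (n : ℕ) (v : W n) (x : E n) :
    clHom n v x = ExteriorAlgebra.ι ℝ v * x
      - CliffordAlgebra.contractLeft (Q := (0 : QuadraticForm ℝ (W n))) (innerₗ (W n) v) x :=
  rfl

open CliffordAlgebra in
theorem clHom_anticomm (n : ℕ) (v w : W n) :
    clHom n v * clHom n w + clHom n w * clHom n v = (-(2 * ⟪v, w⟫_ℝ)) • 1 := by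
  refine LinearMap.ext fun x => ?_
  simp only [LinearMap.add_apply, Module.End.mul_apply, clHom_apply, map_sub,
    contractLeft_ι_mul, innerₗ_apply_apply, LinearMap.smul_apply, Module.End.one_apply]
  rw [contractLeft_comm, real_inner_comm w v]
  have hwedge : ExteriorAlgebra.ι ℝ v * (ExteriorAlgebra.ι ℝ w * x)
      + ExteriorAlgebra.ι ℝ w * (ExteriorAlgebra.ι ℝ v * x) = 0 := by
    rw [← mul_assoc, ← mul_assoc, ← add_mul, ExteriorAlgebra.ι_add_mul_swap, zero_mul]
  linear_combination (norm := module) hwedge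

theorem clHom_mul_self (n : ℕ) (v : W n) : clHom n v * clHom n v = (-⟪v, v⟫_ℝ) • 1 := by
  have h := clHom_anticomm n v v
  rw [← two_smul ℝ, neg_mul_eq_mul_neg, ← smul_smul] at h
  exact smul_right_injective _ two_ne_zero h

theorem spinEnd_commutator (n : ℕ) (t u v : W n) :
    spinEnd n t u * clHom n v - clHom n v * spinEnd n t u = clHom n (bivEnd n t u v) := by
  have h := commutator_mul_sub_mul_of_anticomm (clHom_anticomm n t v) (clHom_anticomm n u v)
  calc spinEnd n t u * clHom n v - clHom n v * spinEnd n t u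
      = (-(1/8 : ℝ)) • ((clHom n t * clHom n u - clHom n u * clHom n t) * clHom n v
          - clHom n v * (clHom n t * clHom n u - clHom n u * clHom n t)) := by
        rw [spinEnd, smul_mul_assoc, mul_smul_comm, smul_sub]
    _ = clHom n (bivEnd n t u v) := by
        rw [h]
        simp only [bivEnd, LinearMap.smul_apply, LinearMap.sub_apply, LinearMap.smulRight_apply,
          innerₗ_apply_apply, map_smul, map_sub]
        module

theorem bivEnd_skew (n : ℕ) (t u x y : W n) :
    ⟪bivEnd n t u x, y⟫_ℝ = -⟪x, bivEnd n t u y⟫_ℝ := by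
  simp only [bivEnd, LinearMap.smul_apply, LinearMap.sub_apply, LinearMap.smulRight_apply,
    innerₗ_apply_apply, real_inner_smul_left, real_inner_smul_right, inner_sub_left,
    inner_sub_right, real_inner_comm x]
  ring

theorem eps_tmul (n : ℕ) (v : W n) (e : E n) : eps n (v ⊗ₜ e) = clHom n v e :=
  TensorProduct.lift.tmul _ _

theorem eps_comp_jmap (n : ℕ) : eps n ∘ₗ jmap n = (-(n : ℝ)) • LinearMap.id := by
  refine LinearMap.ext fun e => ?_
  simp [jmap, eps_tmul, ← Module.End.mul_apply, clHom_mul_self, Nat.cast_smul_eq_nsmul,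
    nsmul_eq_mul]

theorem eps_comp_proj (n : ℕ) : eps n ∘ₗ proj n = 0 := by
  -- for `n = 0` the factor `1 / n` is Lean's junk `0`, but then `W = 0` and `ε = 0`
  rcases eq_or_ne n 0 with rfl | hn
  · refine TensorProduct.ext' fun v e => ?_
    simp [Subsingleton.elim v 0]
  · rw [proj, LinearMap.comp_add, LinearMap.comp_smul, ← LinearMap.comp_assoc, eps_comp_jmap,
      LinearMap.smul_comp, LinearMap.id_comp, LinearMap.comp_id, smul_smul,
      one_div_mul_eq_div, neg_div, div_self (Nat.cast_ne_zero.mpr hn), neg_one_smul,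
      add_neg_cancel]

theorem clHom_spinEnd_apply (n : ℕ) (t u v : W n) (e : E n) :
    clHom n v (spinEnd n t u e) = spinEnd n t u (clHom n v e) - clHom n (bivEnd n t u v) e := by
  rw [← spinEnd_commutator, LinearMap.sub_apply, Module.End.mul_apply, Module.End.mul_apply,
    sub_sub_cancel]

theorem eps_comp_actWE (n : ℕ) (t u : W n) :
    eps n ∘ₗ actWE n t u = spinEnd n t u ∘ₗ eps n := by
  refine TensorProduct.ext' fun v e => ?_
  simp only [actWE, LinearMap.comp_apply, LinearMap.add_apply, TensorProduct.map_tmul,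
    LinearMap.id_apply, map_add, eps_tmul, clHom_spinEnd_apply]
  abel

theorem jmap_comp_spinEnd (n : ℕ) (t u : W n) :
    jmap n ∘ₗ spinEnd n t u = actWE n t u ∘ₗ jmap n := by
  refine LinearMap.ext fun e => ?_
  have hskew := (EuclideanSpace.basisFun (Fin n) ℝ).sum_tmul_of_skew (bivEnd_skew n t u)
    ((clHom n).flip e)
  simp only [LinearMap.flip_apply] at hskew
  simp only [jmap, actWE, LinearMap.comp_apply, LinearMap.sum_apply, TensorProduct.mk_apply,
    map_sum, LinearMap.add_apply, TensorProduct.map_tmul, LinearMap.id_apply,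
    clHom_spinEnd_apply, TensorProduct.tmul_sub, Finset.sum_sub_distrib, Finset.sum_add_distrib,
    hskew]
  abel

/-- The subrepresentation `F = ker ε ⊂ W ⊗ E` admits a canonical `so(n)`-equivariant
splitting: `Π` is a projection onto `F = ker ε`, equivariant for the `so(n)`-action. -/
theorem proj_is_equivariant_projection (n : ℕ) :
    (proj n).comp (proj n) = proj n
      ∧ LinearMap.range (proj n) = LinearMap.ker (eps n)
      ∧ ∀ t u : W n, (proj n).comp (actWE n t u) = (actWE n t u).comp (proj n) :=
  ⟨id_add_smul_comp_idempotent _ _ _ (eps_comp_proj n),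
    range_id_add_smul_comp _ _ _ (eps_comp_proj n),
    fun t u => id_add_smul_comp_commute _ _ _ (eps_comp_actWE n t u) (jmap_comp_spinEnd n t u)⟩
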